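/- Fix n ≥ 2 and ε ∈ {0,1}^n with ε₁ = 1. Let x be an invertible scalar and define, on the free ℚ(q)-module with basis {|m⟩ : m ∈ ℤ^n_+(ε)} (where m₁ ∈ {0,1} since ε₁ = 1), operators: e₀|m⟩ = x|m+e₁+e₂⟩, f₀|m⟩ = x^{−1}[m₂]|m−e₁−e₂⟩, k₀|m⟩ = q₁^{m₁−1}q₂^{m₂}|m⟩, where q₁ = −q^{−1}, q₂ = q, e₁, e₂ are standard basis vectors of ℤ^n, and |m'⟩ is interpreted as 0 whenever m' ∉ ℤ^n_+(ε). Then for every m ∈ ℤ^n_+(ε): (e₀f₀ − f₀e₀)|m⟩ = ((k₀ − k₀^{−1})/(q − q^{−1}))|m⟩, i.e., the eigenvalue of e₀f₀ − f₀e₀ on |m⟩ equals (q₁^{m₁−1}q₂^{m₂} − q₁^{1−m₁}q₂^{−m₂})/(q − q^{−1}). -/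
import Mathlib


noncomputable section

open Finset

/-- The ground field `ℚ(q)`. -/
abbrev Kq := RatFunc ℚ

/-- The indeterminate `q`. -/
def qv : Kq := RatFunc.X

/-- The balanced `q`-integer `[n] = (q^n - q^{-n})/(q - q⁻¹)`. -/
def qint (n : ℤ) : Kq := (qv ^ n - qv ^ (-n)) / (qv - qv⁻¹)

/-- The free `ℚ(q)`-module with basis `|m⟩` indexed by `m ∈ ℤ^n` (only the basis
vectors with `m ∈ ℤ^n_+(ε)` are used by the operators below). -/
abbrev Wsp (n : ℕ) := (Fin n → ℤ) →₀ Kq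

/-- The basis vector `|m⟩`. -/
def ket {n : ℕ} (m : Fin n → ℤ) : Wsp n := Finsupp.single m 1

/-- `m ∈ ℤ^n_+(ε)`: all entries nonnegative, and `m_i ≤ 1` whenever `ε_i = 1`. -/
def IsValid {n : ℕ} (ε : Fin n → Fin 2) (m : Fin n → ℤ) : Prop :=
  (∀ i, 0 ≤ m i) ∧ ∀ i, ε i = 1 → m i ≤ 1

/-- The standard basis vector `e₁` of `ℤ^n` (first coordinate). -/
def ee1 (n : ℕ) : Fin (n + 2) → ℤ := Pi.single 0 1

/-- The standard basis vector `e₂` of `ℤ^n` (second coordinate). -/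
def ee2 (n : ℕ) : Fin (n + 2) → ℤ := Pi.single 1 1

open scoped Classical in
/-- The operator `e₀`: `e₀|m⟩ = x|m+e₁+e₂⟩`, with `|m'⟩` interpreted as `0` whenever
`m' ∉ ℤ^{n}_+(ε)`. -/
def E0 (n : ℕ) (ε : Fin (n + 2) → Fin 2) (x : Kq) : Wsp (n + 2) →ₗ[Kq] Wsp (n + 2) :=
  Finsupp.lsum Kq fun m => LinearMap.toSpanSingleton Kq (Wsp (n + 2))
    (if IsValid ε (m + ee1 n + ee2 n) then x • ket (m + ee1 n + ee2 n) else 0)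

open scoped Classical in
/-- The operator `f₀`: `f₀|m⟩ = x⁻¹[m₂]|m−e₁−e₂⟩`, with `|m'⟩` interpreted as `0`
whenever `m' ∉ ℤ^{n}_+(ε)`. -/
def F0 (n : ℕ) (ε : Fin (n + 2) → Fin 2) (x : Kq) : Wsp (n + 2) →ₗ[Kq] Wsp (n + 2) :=
  Finsupp.lsum Kq fun m => LinearMap.toSpanSingleton Kq (Wsp (n + 2))
    (if IsValid ε (m - ee1 n - ee2 n) then
      (x⁻¹ * qint (m 1)) • ket (m - ee1 n - ee2 n) else 0)

open scoped Classical

lemma E0_ket (n : ℕ) (ε : Fin (n + 2) → Fin 2) (x : Kq) (m : Fin (n+2) → ℤ) :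
    E0 n ε x (ket m) = if IsValid ε (m + ee1 n + ee2 n) then x • ket (m + ee1 n + ee2 n) else 0 := by
  simp [E0, ket]

lemma F0_ket (n : ℕ) (ε : Fin (n + 2) → Fin 2) (x : Kq) (m : Fin (n+2) → ℤ) :
    F0 n ε x (ket m) = if IsValid ε (m - ee1 n - ee2 n) then
      (x⁻¹ * qint (m 1)) • ket (m - ee1 n - ee2 n) else 0 := by
  simp [F0, ket]

lemma hq_ne : (qv : Kq) ≠ 0 := RatFunc.X_ne_zero

lemma key0 (k : ℤ) : -(qint (k+1)) =
    ((-qv⁻¹) ^ (-1 : ℤ) * qv ^ k - (-qv⁻¹) ^ (1 : ℤ) * qv ^ (-k)) / (qv - qv⁻¹) := by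
  rw [qint, ← neg_div]
  congr 1
  rw [zpow_neg_one, zpow_one, inv_neg, inv_inv]
  have h1 : qv ^ (k + 1) = qv ^ k * qv := zpow_add_one₀ hq_ne k
  have h2 : qv ^ (-(k + 1)) = qv ^ (-k) * qv⁻¹ := by
    rw [neg_add, zpow_add₀ hq_ne, zpow_neg_one]
  rw [h1, h2]
  ring

/-- With `q₁ = −q⁻¹` (i.e. `ε₁ = 1`) and `q₂ = q` (i.e. `ε₂ = 0`), for every
`m ∈ ℤ^{n}_+(ε)`:
`(e₀f₀ − f₀e₀)|m⟩ = ((q₁^{m₁−1}q₂^{m₂} − q₁^{1−m₁}q₂^{−m₂})/(q − q⁻¹))·|m⟩`. -/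
theorem e0f0_commutator (n : ℕ) (ε : Fin (n + 2) → Fin 2)
    (hε1 : ε 0 = 1) (hε2 : ε 1 = 0) (x : Kq) (hx : x ≠ 0)
    (m : Fin (n + 2) → ℤ) (hm : IsValid ε m) :
    (E0 n ε x ∘ₗ F0 n ε x - F0 n ε x ∘ₗ E0 n ε x) (ket m)
      = (((-qv⁻¹) ^ (m 0 - 1) * qv ^ (m 1) - (-qv⁻¹) ^ (1 - m 0) * qv ^ (-(m 1)))
          / (qv - qv⁻¹)) • ket m := by
  have h01 : (0 : Fin (n+2)) ≠ 1 := by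
    intro h; simpa using congrArg Fin.val h
  have hm0 : m 0 = 0 ∨ m 0 = 1 := by
    have := hm.1 0; have := hm.2 0 hε1; omega
  have haddm : m - ee1 n - ee2 n + ee1 n + ee2 n = m := by abel
  have hsubm : m + ee1 n + ee2 n - ee1 n - ee2 n = m := by abel
  have hadd0 : (m + ee1 n + ee2 n) 0 = m 0 + 1 := by
    simp [ee1, ee2, Pi.single_apply, h01.symm]
  have hadd1 : (m + ee1 n + ee2 n) 1 = m 1 + 1 := by
    simp [ee1, ee2, Pi.single_apply, h01]
  have hsub0 : (m - ee1 n - ee2 n) 0 = m 0 - 1 := by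
    simp [ee1, ee2, Pi.single_apply, h01.symm]
  have hsub1 : (m - ee1 n - ee2 n) 1 = m 1 - 1 := by
    simp [ee1, ee2, Pi.single_apply, h01]
  have haddi : ∀ i : Fin (n+2), i ≠ 0 → i ≠ 1 → (m + ee1 n + ee2 n) i = m i := by
    intro i hi0 hi1; simp [ee1, ee2, Pi.single_apply, hi0, hi1]
  have hsubi : ∀ i : Fin (n+2), i ≠ 0 → i ≠ 1 → (m - ee1 n - ee2 n) i = m i := by
    intro i hi0 hi1; simp [ee1, ee2, Pi.single_apply, hi0, hi1]
  rw [LinearMap.sub_apply, LinearMap.comp_apply, LinearMap.comp_apply, E0_ket, F0_ket]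
  rcases hm0 with h0 | h0
  · -- m 0 = 0
    have hnv : ¬ IsValid ε (m - ee1 n - ee2 n) := by
      rintro ⟨h, -⟩
      have := h 0
      rw [hsub0, h0] at this
      omega
    have hv : IsValid ε (m + ee1 n + ee2 n) := by
      refine ⟨fun i => ?_, fun i hi => ?_⟩
      · by_cases hi0 : i = 0
        · subst hi0; rw [hadd0]; have := hm.1 0; omega
        · by_cases hi1 : i = 1
          · subst hi1; rw [hadd1]; have := hm.1 1; omega
          · rw [haddi i hi0 hi1]; exact hm.1 i
      · by_cases hi0 : i = 0
        · subst hi0; rw [hadd0, h0]; omega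
        · by_cases hi1 : i = 1
          · subst hi1; rw [hε2] at hi; exact absurd hi (by decide)
          · rw [haddi i hi0 hi1]; exact hm.2 i hi
    rw [if_neg hnv, if_pos hv, map_zero, map_smul, F0_ket, hadd1]
    rw [hsubm, if_pos hm]
    rw [smul_smul, zero_sub, ← neg_smul]
    congr 1
    rw [h0]
    have : x * (x⁻¹ * qint (m 1 + 1)) = qint (m 1 + 1) := by
      field_simp
    rw [this]
    simpa using key0 (m 1)
  · -- m 0 = 1
    have hnv : ¬ IsValid ε (m + ee1 n + ee2 n) := by
      rintro ⟨-, h⟩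
      have := h 0 hε1
      rw [hadd0, h0] at this
      omega
    rw [if_neg hnv, map_zero, sub_zero]
    by_cases hv : IsValid ε (m - ee1 n - ee2 n)
    · rw [if_pos hv, map_smul, E0_ket, haddm, if_pos hm, smul_smul]
      congr 1
      rw [h0]
      have : x⁻¹ * qint (m 1) * x = qint (m 1) := by field_simp
      rw [this, qint]
      norm_num
    · rw [if_neg hv, map_zero]
      have hm1 : m 1 = 0 := by
        by_contra h1
        apply hv
        have hm11 : 1 ≤ m 1 := by have := hm.1 1; omega
        refine ⟨fun i => ?_, fun i hi => ?_⟩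
        · by_cases hi0 : i = 0
          · subst hi0; rw [hsub0, h0]; omega
          · by_cases hi1 : i = 1
            · subst hi1; rw [hsub1]; omega
            · rw [hsubi i hi0 hi1]; exact hm.1 i
        · by_cases hi0 : i = 0
          · subst hi0; rw [hsub0, h0]; omega
          · by_cases hi1 : i = 1
            · subst hi1; rw [hsub1]; have := hm.2 1 hi; omega
            · rw [hsubi i hi0 hi1]; exact hm.2 i hi
      rw [h0, hm1]
      norm_num


end
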